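/- arXiv:2209.08003 — 2 statements merged into one kernel-verified Lean document; each statement's English description precedes it below -/
import Mathlib

section
/- Let n ≥ 1, let D be an n×n real diagonal matrix with strictly positive diagonal entries, let Q be an n×n real orthogonal matrix, and let Λ be an n×n real diagonal matrix with all diagonal entries in [0,1]. Set W = D^{-1/2} Q Λ Qᵀ D^{1/2} and W⁺ = D^{-1/2} Q Λ⁺ Qᵀ D^{1/2}, where Λ⁺ is the diagonal matrix with Λ⁺_ii = Λ_ii⁻¹ if Λ_ii > 0 and Λ⁺_ii = 0 otherwise. Then for every x ∈ ℝⁿ, Wx is the UNIQUE minimizer over z ∈ R(W) of the function z ↦ (1/2)(z − x)ᵀ D (z − x) + (1/2) zᵀ D(I − W)W⁺ z: if z ∈ R(W) satisfies (1/2)(z − x)ᵀ D (z − x) + (1/2) zᵀ D(I − W)W⁺ z ≤ (1/2)(Wx − x)ᵀ D (Wx − x) + (1/2)(Wx)ᵀ D(I − W)W⁺ (Wx), then z = Wx. -/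
/-!
With `P = Qᵀ D^{1/2}` we have `D = PᵀP`, `W = P⁻¹ Λ P` and `W⁺ = P⁻¹ Λ⁺ P`, and `Λ⁺` is just `l⁻¹`
because `0⁻¹ = 0`. In the coordinates `y = P z` the objective becomes
`½ ‖y - P x‖² + ½ ∑ᵢ (1 - λᵢ) λᵢ⁺ yᵢ²`. A point of `R(W)` has `y = Λ v`, and its objective
exceeds that of `W x` (where `y = Λ c`, `c = P x`) by exactly `½ ∑ᵢ λᵢ (vᵢ - cᵢ)²`. This is
nonnegative and vanishes only when `Λ v = Λ c`.
-/

open Matrix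

section Conjugation

variable {ι R : Type*} [Fintype ι] [CommRing R]

lemma dotProduct_transpose_mul_mul_mulVec (P A : Matrix ι ι R) (v : ι → R) :
    v ⬝ᵥ (Pᵀ * A * P) *ᵥ v = (P *ᵥ v) ⬝ᵥ A *ᵥ (P *ᵥ v) := by
  rw [← mulVec_mulVec, ← mulVec_mulVec, dotProduct_mulVec, vecMul_transpose]

lemma transpose_mul_mul_one_sub_conj_mul_conj [DecidableEq ι] {P Pinv : Matrix ι ι R}
    (hP : P * Pinv = 1) (A B : Matrix ι ι R) :
    Pᵀ * P * (1 - Pinv * A * P) * (Pinv * B * P) = Pᵀ * ((1 - A) * B) * P := by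
  simp only [Matrix.mul_sub, Matrix.sub_mul, Matrix.mul_one, Matrix.one_mul, Matrix.mul_assoc]
  simp only [← Matrix.mul_assoc, hP, Matrix.one_mul]

end Conjugation

section Objective

variable {ι : Type*} [Fintype ι]

noncomputable def proxObjective (D K : Matrix ι ι ℝ) (x z : ι → ℝ) : ℝ :=
  1 / 2 * ((z - x) ⬝ᵥ D *ᵥ (z - x)) + 1 / 2 * (z ⬝ᵥ K *ᵥ z)

lemma proxObjective_transpose_mul_mul [DecidableEq ι] (P A : Matrix ι ι ℝ) (x z : ι → ℝ) :
    proxObjective (Pᵀ * P) (Pᵀ * A * P) x z = proxObjective 1 A (P *ᵥ x) (P *ᵥ z) := by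
  have hD : Pᵀ * P = Pᵀ * 1 * P := by rw [Matrix.mul_one]
  rw [proxObjective, proxObjective, hD, dotProduct_transpose_mul_mul_mulVec,
    dotProduct_transpose_mul_mul_mulVec, mulVec_sub]

lemma proxObjective_diagonal_sub [DecidableEq ι] (l v c : ι → ℝ) :
    proxObjective 1 (diagonal ((1 - l) * l⁻¹)) c (l * v) -
        proxObjective 1 (diagonal ((1 - l) * l⁻¹)) c (l * c) =
      1 / 2 * ∑ i, l i * (v i - c i) ^ 2 := by
  simp only [proxObjective, one_mulVec, mulVec_diagonal, dotProduct, Pi.sub_apply, Pi.mul_apply,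
    Pi.inv_apply, Pi.one_apply, ← Finset.sum_sub_distrib, Finset.mul_sum, ← Finset.sum_add_distrib]
  refine Finset.sum_congr rfl fun i _ => ?_
  rcases eq_or_ne (l i) 0 with h | h
  · simp [h]
  · field_simp
    ring

lemma mul_eq_mul_of_proxObjective_diagonal_le [DecidableEq ι] {l v c : ι → ℝ} (hl : 0 ≤ l)
    (h : proxObjective 1 (diagonal ((1 - l) * l⁻¹)) c (l * v) ≤
      proxObjective 1 (diagonal ((1 - l) * l⁻¹)) c (l * c)) :
    l * v = l * c := by
  have hterm : ∀ i ∈ Finset.univ, 0 ≤ l i * (v i - c i) ^ 2 :=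
    fun i _ => mul_nonneg (hl i) (sq_nonneg _)
  have hsum : ∑ i, l i * (v i - c i) ^ 2 = 0 := by
    have := proxObjective_diagonal_sub l v c
    exact le_antisymm (by linarith) (Finset.sum_nonneg hterm)
  funext i
  rcases mul_eq_zero.mp ((Finset.sum_eq_zero_iff_of_nonneg hterm).mp hsum i (Finset.mem_univ i))
    with hli | hvc
  · simp [hli]
  · simp [sub_eq_zero.mp (pow_eq_zero_iff two_ne_zero |>.mp hvc)]

theorem eq_of_proxObjective_le [DecidableEq ι] {P Pinv W Wp : Matrix ι ι ℝ} (hP : P * Pinv = 1)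
    {l : ι → ℝ} (hl : 0 ≤ l) (hW : W = Pinv * diagonal l * P)
    (hWp : Wp = Pinv * diagonal l⁻¹ * P) {x u : ι → ℝ}
    (h : proxObjective (Pᵀ * P) (Pᵀ * P * (1 - W) * Wp) x (W *ᵥ u) ≤
      proxObjective (Pᵀ * P) (Pᵀ * P * (1 - W) * Wp) x (W *ᵥ x)) :
    W *ᵥ u = W *ᵥ x := by
  have hWv : ∀ y, W *ᵥ y = Pinv *ᵥ (l * (P *ᵥ y)) := fun y => by
    rw [hW, ← mulVec_mulVec, ← mulVec_mulVec]
    congr 1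
    exact funext (mulVec_diagonal l _)
  have hPW : ∀ y, P *ᵥ (W *ᵥ y) = l * (P *ᵥ y) := fun y => by
    rw [hWv, mulVec_mulVec, hP, one_mulVec]
  have hdiag : (1 - diagonal l) * diagonal l⁻¹ = diagonal ((1 - l) * l⁻¹) := by
    rw [← diagonal_one, diagonal_sub, diagonal_mul_diagonal]
    rfl
  rw [hWp, hW, transpose_mul_mul_one_sub_conj_mul_conj hP, ← hW, hdiag,
    proxObjective_transpose_mul_mul, proxObjective_transpose_mul_mul, hPW, hPW] at h
  rw [hWv, hWv, mul_eq_mul_of_proxObjective_diagonal_le hl h]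

end Objective

theorem stmt_6_general (n : ℕ)
    (d l : Fin n → ℝ) (hd : ∀ i, 0 < d i) (hl : ∀ i, 0 ≤ l i ∧ l i ≤ 1)
    (Q W Wp : Matrix (Fin n) (Fin n) ℝ)
    (hQ : Qᵀ * Q = 1)
    (hW : W = diagonal (fun i => (Real.sqrt (d i))⁻¹) * Q * diagonal l * Qᵀ *
      diagonal (fun i => Real.sqrt (d i)))
    (hWp : Wp = diagonal (fun i => (Real.sqrt (d i))⁻¹) * Q *
      diagonal (fun i => if 0 < l i then (l i)⁻¹ else 0) * Qᵀ *
      diagonal (fun i => Real.sqrt (d i))) :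
    ∀ x z : Fin n → ℝ, (∃ u : Fin n → ℝ, W *ᵥ u = z) →
      (1 / 2) * ((z - x) ⬝ᵥ (diagonal d) *ᵥ (z - x)) +
          (1 / 2) * (z ⬝ᵥ (diagonal d * (1 - W) * Wp) *ᵥ z) ≤
        (1 / 2) * ((W *ᵥ x - x) ⬝ᵥ (diagonal d) *ᵥ (W *ᵥ x - x)) +
          (1 / 2) * ((W *ᵥ x) ⬝ᵥ (diagonal d * (1 - W) * Wp) *ᵥ (W *ᵥ x)) →
      z = W *ᵥ x := by
  set P := Qᵀ * diagonal (fun i => Real.sqrt (d i))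
  have hP : P * (diagonal (fun i => (Real.sqrt (d i))⁻¹) * Q) = 1 := by
    rw [Matrix.mul_assoc, ← Matrix.mul_assoc (diagonal _), diagonal_mul_diagonal]
    simp [fun i => (Real.sqrt_pos.2 (hd i)).ne', hQ]
  have hD : diagonal d = Pᵀ * P := by
    rw [transpose_mul, diagonal_transpose, transpose_transpose, Matrix.mul_assoc,
      ← Matrix.mul_assoc Q, mul_eq_one_comm.mp hQ, Matrix.one_mul, diagonal_mul_diagonal]
    simp [fun i => Real.mul_self_sqrt (hd i).le]
  have hlp : (fun i => if 0 < l i then (l i)⁻¹ else 0) = l⁻¹ := funext fun i => by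
    rcases (hl i).1.lt_or_eq with h | h
    · simp [h]
    · simp [← h]
  rintro x z ⟨u, rfl⟩ hle
  rw [hD] at hle
  exact eq_of_proxObjective_le hP (fun i => (hl i).1)
    (by rw [hW]; simp only [P, Matrix.mul_assoc])
    (by rw [hWp, hlp]; simp only [P, Matrix.mul_assoc]) hle

theorem stmt_6 (n : ℕ) (hn : 1 ≤ n)
    (d l : Fin n → ℝ) (hd : ∀ i, 0 < d i) (hl : ∀ i, 0 ≤ l i ∧ l i ≤ 1)
    (Q W Wp : Matrix (Fin n) (Fin n) ℝ)
    (hQ : Qᵀ * Q = 1)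
    (hW : W = diagonal (fun i => (Real.sqrt (d i))⁻¹) * Q * diagonal l * Qᵀ *
      diagonal (fun i => Real.sqrt (d i)))
    (hWp : Wp = diagonal (fun i => (Real.sqrt (d i))⁻¹) * Q *
      diagonal (fun i => if 0 < l i then (l i)⁻¹ else 0) * Qᵀ *
      diagonal (fun i => Real.sqrt (d i))) :
    ∀ x z : Fin n → ℝ, (∃ u : Fin n → ℝ, W *ᵥ u = z) →
      (1 / 2) * ((z - x) ⬝ᵥ (diagonal d) *ᵥ (z - x)) +
          (1 / 2) * (z ⬝ᵥ (diagonal d * (1 - W) * Wp) *ᵥ z) ≤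
        (1 / 2) * ((W *ᵥ x - x) ⬝ᵥ (diagonal d) *ᵥ (W *ᵥ x - x)) +
          (1 / 2) * ((W *ᵥ x) ⬝ᵥ (diagonal d * (1 - W) * Wp) *ᵥ (W *ᵥ x)) →
      z = W *ᵥ x :=
  stmt_6_general n d l hd hl Q W Wp hQ hW hWp
end

section
/- Let n, m ≥ 1, let D be an n×n real diagonal matrix with strictly positive diagonal entries, let Q be an n×n real orthogonal matrix, and let Λ be an n×n real diagonal matrix with all diagonal entries in [0,1]. Set W = D^{-1/2} Q Λ Qᵀ D^{1/2}. Let F be any m×n real matrix, y ∈ ℝᵐ, and ρ > 0. Define A = Wᵀ Fᵀ F W + ρ Wᵀ D (I − W), b = Wᵀ Fᵀ y, and θ(z) = (1/2)‖y − F W z‖² + (ρ/2) zᵀ Wᵀ D (I − W) z for z ∈ ℝⁿ, where ‖·‖ is the Euclidean norm on ℝᵐ. Then z* ∈ ℝⁿ satisfies A z* = b if and only if z* is a global minimizer of θ, i.e., θ(z*) ≤ θ(z) for all z ∈ ℝⁿ. -/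
open Matrix

/-!
Both summands of `A` are positive semidefinite: `Wᵀ Fᵀ F W = (F W)ᵀ (F W)` is a Gram matrix, and
with `P = Qᵀ D^{1/2}` one has `Wᵀ D = Pᵀ Λ P` and `P W = Λ P`, so `Wᵀ D (I - W) = Pᵀ Λ (I - Λ) P`
with `0 ≤ Λ (I - Λ)`. Expanding the square, `θ z = ½ zᵀ A z - bᵀ z + ½ ‖y‖²` is a convex quadratic.
Along `z* + t w` it equals `θ z* + t (A z* - b)ᵀ w + ½ t² wᵀ A w`, so `A z* = b` forces a minimum,
and at a minimum the slope in the direction `w = A z* - b`, namely `‖A z* - b‖²`, must vanish.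
-/

namespace Matrix

variable {ι κ : Type*} [Fintype ι] [Fintype κ]

lemma sub_mulVec_dotProduct_self {R : Type*} [CommRing R] (G : Matrix κ ι R) (y : κ → R)
    (z : ι → R) :
    (y - G *ᵥ z) ⬝ᵥ (y - G *ᵥ z) = z ⬝ᵥ (Gᵀ * G) *ᵥ z - 2 * ((Gᵀ *ᵥ y) ⬝ᵥ z) + y ⬝ᵥ y := by
  rw [← mulVec_mulVec, dotProduct_mulVec, vecMul_transpose, mulVec_transpose,
    ← dotProduct_mulVec, sub_dotProduct, dotProduct_sub, dotProduct_sub,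
    dotProduct_comm (G *ᵥ z) y]
  ring

lemma add_dotProduct_mulVec_add_of_transpose_eq {R : Type*} [CommRing R] {A : Matrix ι ι R}
    (hA : Aᵀ = A) (x w : ι → R) :
    (x + w) ⬝ᵥ A *ᵥ (x + w) = x ⬝ᵥ A *ᵥ x + 2 * ((A *ᵥ x) ⬝ᵥ w) + w ⬝ᵥ A *ᵥ w := by
  have hsymm : x ⬝ᵥ A *ᵥ w = (A *ᵥ x) ⬝ᵥ w := by
    rw [dotProduct_mulVec, ← mulVec_transpose, hA]
  rw [mulVec_add, dotProduct_add, add_dotProduct, add_dotProduct, hsymm,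
    dotProduct_comm w (A *ᵥ x)]
  ring

theorem PosSemidef.mulVec_eq_iff_forall_le {A : Matrix ι ι ℝ} (hA : A.PosSemidef)
    (b x : ι → ℝ) :
    A *ᵥ x = b ↔ ∀ z, 2⁻¹ * (x ⬝ᵥ A *ᵥ x) - b ⬝ᵥ x ≤ 2⁻¹ * (z ⬝ᵥ A *ᵥ z) - b ⬝ᵥ z := by
  have hAT : Aᵀ = A := by simpa using hA.isHermitian.eq
  set q : (ι → ℝ) → ℝ := fun z => 2⁻¹ * (z ⬝ᵥ A *ᵥ z) - b ⬝ᵥ z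
  have hq_add : ∀ w, q (x + w) = q x + (A *ᵥ x - b) ⬝ᵥ w + 2⁻¹ * (w ⬝ᵥ A *ᵥ w) := by
    intro w
    simp only [q, add_dotProduct_mulVec_add_of_transpose_eq hAT, dotProduct_add, sub_dotProduct]
    ring
  constructor
  · rintro rfl z
    have hqz := hq_add (z - x)
    rw [add_sub_cancel, sub_self, zero_dotProduct] at hqz
    have hnonneg : 0 ≤ (z - x) ⬝ᵥ A *ᵥ (z - x) := by
      simpa only [star_trivial] using hA.dotProduct_mulVec_nonneg (z - x)
    change q x ≤ q z
    linarith
  · intro hmin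
    set r := A *ᵥ x - b
    set g : ℝ → ℝ := fun t => q x + t * (r ⬝ᵥ r) + t ^ 2 * (2⁻¹ * (r ⬝ᵥ A *ᵥ r))
    have hg_min : IsLocalMin g 0 :=
      Filter.Eventually.of_forall fun t => by
        have hqt := hq_add (t • r)
        simp only [dotProduct_smul, mulVec_smul, smul_dotProduct, smul_eq_mul] at hqt
        have hle : q x ≤ q (x + t • r) := hmin _
        linear_combination hle + hqt
    have hg_deriv : HasDerivAt g (r ⬝ᵥ r) 0 :=
      ((((hasDerivAt_id 0).mul_const (r ⬝ᵥ r)).const_add (q x)).add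
        ((hasDerivAt_pow 2 0).mul_const (2⁻¹ * (r ⬝ᵥ A *ᵥ r)))).congr_deriv (by norm_num)
    rw [← sub_eq_zero, ← dotProduct_self_eq_zero]
    exact hg_min.hasDerivAt_eq_zero hg_deriv

variable [DecidableEq ι]

lemma transpose_mul_diagonal_mul_one_sub_eq {K : Type*} [Field K] {s l : ι → K}
    (hs : ∀ i, s i ≠ 0) {Q W : Matrix ι ι K} (hQ : Qᵀ * Q = 1)
    (hW : W = diagonal (fun i => (s i)⁻¹) * Q * diagonal l * Qᵀ * diagonal s) :
    Wᵀ * diagonal (fun i => s i * s i) * (1 - W) =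
      (Qᵀ * diagonal s)ᵀ * diagonal (fun i => l i - l i * l i) * (Qᵀ * diagonal s) := by
  set P := Qᵀ * diagonal s with hP
  have hmul_inv : diagonal s * diagonal (fun i => (s i)⁻¹) = 1 := by
    rw [diagonal_mul_diagonal, ← diagonal_one]
    exact congrArg diagonal (funext fun i => mul_inv_cancel₀ (hs i))
  have hinv_mul : diagonal (fun i => (s i)⁻¹) * diagonal s = 1 := by
    rw [diagonal_mul_diagonal, ← diagonal_one]
    exact congrArg diagonal (funext fun i => inv_mul_cancel₀ (hs i))
  have hWD : Wᵀ * diagonal (fun i => s i * s i) = Pᵀ * diagonal l * P := by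
    rw [hW, hP, ← diagonal_mul_diagonal]
    simp only [transpose_mul, diagonal_transpose, transpose_transpose, Matrix.mul_assoc]
    rw [← Matrix.mul_assoc (diagonal fun i => (s i)⁻¹) (diagonal s), hinv_mul, Matrix.one_mul]
  have hPW : P * W = diagonal l * P := by
    rw [hW, hP]
    simp only [Matrix.mul_assoc]
    rw [← Matrix.mul_assoc (diagonal s), hmul_inv, Matrix.one_mul, ← Matrix.mul_assoc Qᵀ, hQ,
      Matrix.one_mul]
  rw [Matrix.mul_sub, Matrix.mul_one, hWD, Matrix.mul_assoc _ P, hPW, ← diagonal_sub,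
    ← diagonal_mul_diagonal]
  simp only [Matrix.mul_sub, Matrix.sub_mul, Matrix.mul_assoc]

lemma posSemidef_transpose_mul_diagonal_mul_one_sub {d l : ι → ℝ}
    (hd : ∀ i, 0 < d i) (hl : ∀ i, 0 ≤ l i ∧ l i ≤ 1) {Q W : Matrix ι ι ℝ} (hQ : Qᵀ * Q = 1)
    (hW : W = diagonal (fun i => (Real.sqrt (d i))⁻¹) * Q * diagonal l * Qᵀ *
      diagonal (fun i => Real.sqrt (d i))) :
    (Wᵀ * diagonal d * (1 - W)).PosSemidef := by
  have hd_sq : d = fun i => Real.sqrt (d i) * Real.sqrt (d i) :=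
    funext fun i => (Real.mul_self_sqrt (hd i).le).symm
  rw [hd_sq, transpose_mul_diagonal_mul_one_sub_eq (fun i => (Real.sqrt_pos.2 (hd i)).ne') hQ hW,
    ← conjTranspose_eq_transpose_of_trivial]
  refine (PosSemidef.diagonal fun i => ?_).conjTranspose_mul_mul_same _
  obtain ⟨hl0, hl1⟩ := hl i
  show 0 ≤ l i - l i * l i
  nlinarith

end Matrix

theorem stmt_11_general (n m : ℕ)
    (d l : Fin n → ℝ) (hd : ∀ i, 0 < d i) (hl : ∀ i, 0 ≤ l i ∧ l i ≤ 1)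
    (Q W : Matrix (Fin n) (Fin n) ℝ)
    (hQ : Qᵀ * Q = 1)
    (hW : W = diagonal (fun i => (Real.sqrt (d i))⁻¹) * Q * diagonal l * Qᵀ *
      diagonal (fun i => Real.sqrt (d i)))
    (F : Matrix (Fin m) (Fin n) ℝ) (y : Fin m → ℝ) (ρ : ℝ) (hρ : 0 < ρ)
    (A : Matrix (Fin n) (Fin n) ℝ) (b : Fin n → ℝ)
    (hA : A = Wᵀ * Fᵀ * F * W + ρ • (Wᵀ * diagonal d * (1 - W)))
    (hb : b = (Wᵀ * Fᵀ) *ᵥ y)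
    (θ : (Fin n → ℝ) → ℝ)
    (hθ : ∀ z, θ z = (1 / 2) * ((y - (F * W) *ᵥ z) ⬝ᵥ (y - (F * W) *ᵥ z)) +
      (ρ / 2) * (z ⬝ᵥ (Wᵀ * diagonal d * (1 - W)) *ᵥ z)) :
    ∀ zstar : Fin n → ℝ, A *ᵥ zstar = b ↔ ∀ z : Fin n → ℝ, θ zstar ≤ θ z := by
  have hgram : Wᵀ * Fᵀ * F * W = (F * W)ᵀ * (F * W) := by
    simp only [transpose_mul, Matrix.mul_assoc]
  have hA_psd : A.PosSemidef := by
    rw [hA, hgram, ← conjTranspose_eq_transpose_of_trivial]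
    exact (posSemidef_conjTranspose_mul_self _).add
      ((posSemidef_transpose_mul_diagonal_mul_one_sub hd hl hQ hW).smul hρ.le)
  have hθ_quad : ∀ z, θ z = (2⁻¹ * (z ⬝ᵥ A *ᵥ z) - b ⬝ᵥ z) + 2⁻¹ * (y ⬝ᵥ y) := by
    intro z
    rw [hθ, sub_mulVec_dotProduct_self, hA, hgram, hb, ← transpose_mul, add_mulVec,
      dotProduct_add, smul_mulVec, dotProduct_smul, smul_eq_mul]
    ring
  intro zstar
  simp only [hθ_quad, add_le_add_iff_right]
  exact hA_psd.mulVec_eq_iff_forall_le b zstar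

theorem stmt_11 (n m : ℕ) (hn : 1 ≤ n) (hm : 1 ≤ m)
    (d l : Fin n → ℝ) (hd : ∀ i, 0 < d i) (hl : ∀ i, 0 ≤ l i ∧ l i ≤ 1)
    (Q W : Matrix (Fin n) (Fin n) ℝ)
    (hQ : Qᵀ * Q = 1)
    (hW : W = diagonal (fun i => (Real.sqrt (d i))⁻¹) * Q * diagonal l * Qᵀ *
      diagonal (fun i => Real.sqrt (d i)))
    (F : Matrix (Fin m) (Fin n) ℝ) (y : Fin m → ℝ) (ρ : ℝ) (hρ : 0 < ρ)
    (A : Matrix (Fin n) (Fin n) ℝ) (b : Fin n → ℝ)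
    (hA : A = Wᵀ * Fᵀ * F * W + ρ • (Wᵀ * diagonal d * (1 - W)))
    (hb : b = (Wᵀ * Fᵀ) *ᵥ y)
    (θ : (Fin n → ℝ) → ℝ)
    (hθ : ∀ z, θ z = (1 / 2) * ((y - (F * W) *ᵥ z) ⬝ᵥ (y - (F * W) *ᵥ z)) +
      (ρ / 2) * (z ⬝ᵥ (Wᵀ * diagonal d * (1 - W)) *ᵥ z)) :
    ∀ zstar : Fin n → ℝ, A *ᵥ zstar = b ↔ ∀ z : Fin n → ℝ, θ zstar ≤ θ z :=
  stmt_11_general n m d l hd hl Q W hQ hW F y ρ hρ A b hA hb θ hθ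
end
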